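/- arXiv:1903.05045 — 6 statements merged into one kernel-verified Lean document; each statement's English description precedes it below -/
import Mathlib

section
/- Under the assumptions on w, every element f of the weighted space H_w has a limit at infinity: lim_{t→∞} f(t) exists in U, and equals f(0) + ∫₀^∞ f'(s) ds. -/
open MeasureTheory Set Filter Real

/-!
By AM-GM, `‖f'‖ ≤ (w ‖f'‖² + w⁻¹) / 2` wherever `w > 0`, and `w ≥ w 0 = 1` on `[0, ∞)`; both terms
on the right are integrable, so `f' ∈ L¹(0, ∞)`. Hence `f x = f 0 + ∫₀ˣ f'` converges to
`f 0 + ∫₀^∞ f'` as `x → ∞`.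
-/

lemma aestronglyMeasurable_restrict_Ioi_of_intervalIntegrable {E : Type*} [NormedAddCommGroup E]
    {g : ℝ → E} {a : ℝ} (hg : ∀ x ∈ Ici a, IntervalIntegrable g volume a x) :
    AEStronglyMeasurable g (volume.restrict (Ioi a)) := by
  have hcover : ⋃ n : ℕ, Ioc a (max a n) = Ioi a :=
    iUnion_Ioc_eq_Ioi_self_iff.2 fun x _ ↦
      (exists_nat_ge x).imp fun _ hn ↦ hn.trans (le_max_right _ _)
  rw [← hcover, aestronglyMeasurable_iUnion_iff]
  exact fun n ↦ (hg _ (le_max_left a n)).1.aestronglyMeasurable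

lemma le_half_mul_sq_add_inv {w t : ℝ} (hw : 0 < w) :
    t ≤ (w * t ^ 2 + w⁻¹) / 2 := by
  have hinv : w * w⁻¹ = 1 := mul_inv_cancel₀ hw.ne'
  nlinarith [sq_nonneg (w * t - 1)]

lemma integrable_of_integrable_mul_norm_sq {E α : Type*} [NormedAddCommGroup E] [MeasurableSpace α]
    {μ : Measure α} {g : α → E} {w : α → ℝ} (hg : AEStronglyMeasurable g μ)
    (hw_pos : ∀ᵐ x ∂μ, 0 < w x) (hw_inv : Integrable (fun x ↦ (w x)⁻¹) μ)
    (hgw : Integrable (fun x ↦ w x * ‖g x‖ ^ 2) μ) :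
    Integrable g μ := by
  refine ((hgw.add hw_inv).div_const 2).mono' hg ?_
  filter_upwards [hw_pos] with x hx
  exact le_half_mul_sq_add_inv hx

theorem stmt_1_general {U : Type*} [NormedAddCommGroup U] [InnerProductSpace ℝ U]
    (w : ℝ → ℝ) (hw_mono : MonotoneOn w (Ici 0))
    (hw0 : w 0 = 1)
    (hw_inv : IntegrableOn (fun x => (w x)⁻¹) (Ioi 0))
    (f f' : ℝ → U)
    (hf_loc : ∀ x ∈ Ici (0:ℝ), IntervalIntegrable f' volume 0 x)
    (hf_ac : ∀ x ∈ Ici (0:ℝ), f x = f 0 + ∫ t in (0:ℝ)..x, f' t)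
    (hf_w : IntegrableOn (fun x => w x * ‖f' x‖ ^ 2) (Ioi 0)) :
    Tendsto f atTop (nhds (f 0 + ∫ s in Ioi (0:ℝ), f' s)) := by
  have hw_pos : ∀ᵐ x ∂volume.restrict (Ioi 0), 0 < w x := by
    filter_upwards [ae_restrict_mem measurableSet_Ioi] with x hx
    have hx : (0:ℝ) ≤ x := le_of_lt hx
    exact zero_lt_one.trans_le (hw0 ▸ hw_mono self_mem_Ici hx hx)
  have hf'_int : IntegrableOn f' (Ioi 0) :=
    integrable_of_integrable_mul_norm_sq
      (aestronglyMeasurable_restrict_Ioi_of_intervalIntegrable hf_loc) hw_pos hw_inv hf_w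
  refine ((intervalIntegral_tendsto_integral_Ioi 0 hf'_int tendsto_id).const_add (f 0)).congr' ?_
  filter_upwards [eventually_ge_atTop 0] with x hx
  exact (hf_ac x hx).symm

/-- every element `f` of the weighted space `H_w` (absolutely continuous with
derivative `f'` and `∫₀^∞ w ‖f'‖² < ∞`) has a limit at infinity, equal to
`f 0 + ∫₀^∞ f'(s) ds`. -/
theorem stmt_1 {U : Type*} [NormedAddCommGroup U] [InnerProductSpace ℝ U]
    [CompleteSpace U] [SecondCountableTopology U]
    (w : ℝ → ℝ) (hw_cont : Continuous w) (hw_mono : MonotoneOn w (Ici 0))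
    (hw0 : w 0 = 1)
    (hw_diff : Differentiable ℝ w)
    (hw_inv : IntegrableOn (fun x => (w x)⁻¹) (Ioi 0))
    (f f' : ℝ → U)
    (hf_loc : ∀ x ∈ Ici (0:ℝ), IntervalIntegrable f' volume 0 x)
    (hf_ac : ∀ x ∈ Ici (0:ℝ), f x = f 0 + ∫ t in (0:ℝ)..x, f' t)
    (hf_w : IntegrableOn (fun x => w x * ‖f' x‖ ^ 2) (Ioi 0)) :
    Tendsto f atTop (nhds (f 0 + ∫ s in Ioi (0:ℝ), f' s)) :=
  stmt_1_general w hw_mono hw0 hw_inv f f' hf_loc hf_ac hf_w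
end

section
/- The evaluation map δ_x : H_w → U, f ↦ f(x), is a bounded linear operator whose adjoint is given by δ_x*(u)(y) = (1 + ∫₀^{y∧x} w(s)⁻¹ ds)·u, and ‖δ_x‖²_op = ‖δ_x*‖²_op = 1 + ∫₀^x w(s)⁻¹ ds ≤ 1 + x. -/
open MeasureTheory Set Filter Real
open scoped RealInnerProductSpace

/-!
The adjoint identity is the fundamental theorem of calculus: in the weighted inner product the
derivative `w⁻¹ 1_{[0,x]} u` of `δ_x* u` cancels the weight, leaving `⟪∫₀ˣ f', u⟫ = ⟪f x - f 0, u⟫`.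
The bound on `‖f x‖²` is Cauchy–Schwarz for `f x = f 0 · 1 + ∫₀ˣ (w^½ f') w^{-½}`, proved by the
discriminant argument: the quadratic `t ↦ A t² - 2 ‖f x‖ t + B` is nonnegative because of the
pointwise AM–GM inequality `2 a t ≤ t² w a² + w⁻¹`.
-/

lemma sq_le_mul_of_forall_two_mul_mul_le {A B c : ℝ} (hA : 0 ≤ A) (hB : 0 ≤ B) (hc : 0 ≤ c)
    (h : ∀ t, 0 < t → 2 * c * t ≤ A * t ^ 2 + B) : c ^ 2 ≤ A * B := by
  have hquad : ∀ t, 0 ≤ A * (t * t) + (-2 * c) * t + B := by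
    intro t
    rcases le_or_gt t 0 with ht | ht
    · nlinarith [mul_nonneg hA (mul_self_nonneg t), mul_nonneg hc (neg_nonneg.2 ht)]
    · nlinarith [h t ht]
  have := discrim_le_zero hquad
  rw [discrim] at this
  nlinarith

lemma two_mul_mul_le_sq_mul_add_inv {w : ℝ} (hw : 0 < w) (a t : ℝ) :
    2 * a * t ≤ t ^ 2 * (w * a ^ 2) + w⁻¹ := by
  have key : 2 * a * t * w ≤ t ^ 2 * w ^ 2 * a ^ 2 + 1 := by nlinarith [sq_nonneg (t * w * a - 1)]
  rw [← mul_le_mul_iff_of_pos_right hw]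
  calc 2 * a * t * w ≤ t ^ 2 * w ^ 2 * a ^ 2 + 1 := key
    _ = (t ^ 2 * (w * a ^ 2) + w⁻¹) * w := by field_simp

lemma ite_le_eq_indicator {E : Type*} [Zero E] (g : ℝ → E) (x : ℝ) :
    (fun s => if s ≤ x then g s else 0) = (Iic x).indicator g := by
  ext s
  simp [indicator_apply]

section IndicatorIntegrals

variable {E : Type*} [NormedAddCommGroup E] [NormedSpace ℝ E]

lemma setIntegral_Ioi_ite_le (g : ℝ → E) (a x : ℝ) :
    ∫ s in Ioi a, (if s ≤ x then g s else 0) = ∫ s in Ioc a x, g s := by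
  rw [ite_le_eq_indicator, setIntegral_indicator measurableSet_Iic, Ioi_inter_Iic]

lemma intervalIntegral_ite_le {g : ℝ → E} {a x y : ℝ} (hy : a ≤ y) (hx : a ≤ x) :
    ∫ s in a..y, (if s ≤ x then g s else 0) = ∫ s in a..min y x, g s := by
  rw [intervalIntegral.integral_of_le hy, intervalIntegral.integral_of_le (le_min hy hx),
    ite_le_eq_indicator, setIntegral_indicator measurableSet_Iic, Ioc_inter_Iic]

end IndicatorIntegrals

section WeightedSpace

variable {U : Type*} [NormedAddCommGroup U] [InnerProductSpace ℝ U] {w : ℝ → ℝ} {x : ℝ}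

lemma inner_add_integral_weight_mul_inner_ite_eq [CompleteSpace U] {f f' : ℝ → U} (u : U)
    (hw : ∀ s, 0 < s → w s ≠ 0) (hx : 0 ≤ x) (hf' : IntervalIntegrable f' volume 0 x)
    (hf : f x = f 0 + ∫ t in (0:ℝ)..x, f' t) :
    ⟪f 0, u⟫ + ∫ s in Ioi (0:ℝ), w s * ⟪f' s, (if s ≤ x then (w s)⁻¹ else 0) • u⟫
      = ⟪f x, u⟫ := by
  have hcancel : EqOn (fun s => w s * ⟪f' s, (if s ≤ x then (w s)⁻¹ else 0) • u⟫)
      (fun s => if s ≤ x then ⟪u, f' s⟫ else 0) (Ioi 0) := by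
    intro s hs
    dsimp only
    split_ifs
    · rw [real_inner_smul_right, real_inner_comm, ← mul_assoc, mul_inv_cancel₀ (hw s hs),
        one_mul]
    · simp
  rw [setIntegral_congr_fun measurableSet_Ioi hcancel, setIntegral_Ioi_ite_le,
    integral_inner ((intervalIntegrable_iff_integrableOn_Ioc_of_le hx).mp hf'),
    hf, intervalIntegral.integral_of_le hx, inner_add_left,
    real_inner_comm (∫ s in Ioc 0 x, f' s) u]

lemma sq_norm_add_integral_weight_mul_sq_norm_ite (u : U) (hw : ∀ s, 0 < s → w s ≠ 0)
    (hx : 0 ≤ x) :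
    ‖u‖ ^ 2 + ∫ s in Ioi (0:ℝ), w s * ‖(if s ≤ x then (w s)⁻¹ else 0) • u‖ ^ 2
      = (1 + ∫ s in (0:ℝ)..x, (w s)⁻¹) * ‖u‖ ^ 2 := by
  have hcancel : EqOn (fun s => w s * ‖(if s ≤ x then (w s)⁻¹ else 0) • u‖ ^ 2)
      (fun s => if s ≤ x then (w s)⁻¹ * ‖u‖ ^ 2 else 0) (Ioi 0) := by
    intro s hs
    dsimp only
    split_ifs
    · rw [norm_smul, mul_pow, Real.norm_eq_abs, sq_abs]
      field_simp [hw s hs]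
    · simp
  rw [setIntegral_congr_fun measurableSet_Ioi hcancel, setIntegral_Ioi_ite_le, integral_mul_const,
    ← intervalIntegral.integral_of_le hx]
  ring

lemma sq_norm_le_one_add_integral_inv_mul {f f' : ℝ → U} (hw : ∀ s, 0 ≤ s → 0 < w s)
    (hx : 0 ≤ x) (hw_inv : IntervalIntegrable (fun s => (w s)⁻¹) volume 0 x)
    (hf' : IntervalIntegrable f' volume 0 x) (hf : f x = f 0 + ∫ t in (0:ℝ)..x, f' t)
    (hfw : IntegrableOn (fun y => w y * ‖f' y‖ ^ 2) (Ioi 0)) :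
    ‖f x‖ ^ 2 ≤ (1 + ∫ s in (0:ℝ)..x, (w s)⁻¹)
      * (‖f 0‖ ^ 2 + ∫ s in Ioi (0:ℝ), w s * ‖f' s‖ ^ 2) := by
  have hfw_nonneg : ∀ s ∈ Ioi (0:ℝ), 0 ≤ w s * ‖f' s‖ ^ 2 :=
    fun s hs => mul_nonneg (hw s (le_of_lt hs)).le (sq_nonneg _)
  have hfw_x : IntervalIntegrable (fun s => w s * ‖f' s‖ ^ 2) volume 0 x :=
    (intervalIntegrable_iff_integrableOn_Ioc_of_le hx).mpr (hfw.mono_set Ioc_subset_Ioi_self)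
  have hfw_le :
      ∫ s in (0:ℝ)..x, w s * ‖f' s‖ ^ 2 ≤ ∫ s in Ioi (0:ℝ), w s * ‖f' s‖ ^ 2 := by
    rw [intervalIntegral.integral_of_le hx]
    exact setIntegral_mono_set hfw ((ae_restrict_iff' measurableSet_Ioi).mpr
      (Eventually.of_forall hfw_nonneg)) Ioc_subset_Ioi_self.eventuallyLE
  rw [mul_comm]
  refine sq_le_mul_of_forall_two_mul_mul_le ?_ ?_ (norm_nonneg _) fun t ht => ?_
  · exact add_nonneg (sq_nonneg _) (setIntegral_nonneg measurableSet_Ioi hfw_nonneg)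
  · exact add_nonneg zero_le_one
      (intervalIntegral.integral_nonneg hx fun s hs => (inv_pos.2 (hw s hs.1)).le)
  have hpointwise : ∫ s in (0:ℝ)..x, 2 * ‖f' s‖ * t
      ≤ ∫ s in (0:ℝ)..x, (t ^ 2 * (w s * ‖f' s‖ ^ 2) + (w s)⁻¹) :=
    intervalIntegral.integral_mono_on hx ((hf'.norm.const_mul 2).mul_const t)
      ((hfw_x.const_mul _).add hw_inv) fun s hs => two_mul_mul_le_sq_mul_add_inv (hw s hs.1) _ _
  have hnorm : ‖f x‖ ≤ ‖f 0‖ + ∫ s in (0:ℝ)..x, ‖f' s‖ := by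
    rw [hf]
    exact (norm_add_le _ _).trans
      (add_le_add_right (intervalIntegral.norm_integral_le_integral_norm hx) _)
  calc 2 * ‖f x‖ * t ≤ 2 * ‖f 0‖ * t + ∫ s in (0:ℝ)..x, 2 * ‖f' s‖ * t := by
        rw [intervalIntegral.integral_mul_const, intervalIntegral.integral_const_mul]
        nlinarith
    _ ≤ (t ^ 2 * (1 * ‖f 0‖ ^ 2) + 1⁻¹)
          + ∫ s in (0:ℝ)..x, (t ^ 2 * (w s * ‖f' s‖ ^ 2) + (w s)⁻¹) :=
        add_le_add (two_mul_mul_le_sq_mul_add_inv one_pos _ _) hpointwise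
    _ = t ^ 2 * (‖f 0‖ ^ 2 + ∫ s in (0:ℝ)..x, w s * ‖f' s‖ ^ 2)
          + (1 + ∫ s in (0:ℝ)..x, (w s)⁻¹) := by
        rw [intervalIntegral.integral_add (hfw_x.const_mul _) hw_inv,
          intervalIntegral.integral_const_mul]
        ring
    _ ≤ (‖f 0‖ ^ 2 + ∫ s in Ioi (0:ℝ), w s * ‖f' s‖ ^ 2) * t ^ 2
          + (1 + ∫ s in (0:ℝ)..x, (w s)⁻¹) := by
        nlinarith [mul_le_mul_of_nonneg_left hfw_le (sq_nonneg t)]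

end WeightedSpace

theorem stmt_3_general {U : Type*} [NormedAddCommGroup U] [InnerProductSpace ℝ U]
    [CompleteSpace U]
    (w : ℝ → ℝ) (hw_mono : MonotoneOn w (Ici 0))
    (hw0 : w 0 = 1)
    (hw_inv : IntegrableOn (fun s => (w s)⁻¹) (Ioi 0))
    (x : ℝ) (hx : 0 ≤ x) (u : U) :
    -- the adjoint identity ⟨f, δ_x*(u)⟩_w = ⟨δ_x f, u⟩_U for every f ∈ H_w,
    -- where δ_x*(u) has value u at 0 and derivative y ↦ (w y)⁻¹ 1_{y ≤ x} • u
    (∀ f f' : ℝ → U,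
      (∀ y ∈ Ici (0:ℝ), IntervalIntegrable f' volume 0 y) →
      (∀ y ∈ Ici (0:ℝ), f y = f 0 + ∫ t in (0:ℝ)..y, f' t) →
      IntegrableOn (fun y => w y * ‖f' y‖ ^ 2) (Ioi 0) →
      ⟪f 0, u⟫ + ∫ s in Ioi (0:ℝ), w s * ⟪f' s, (if s ≤ x then (w s)⁻¹ else 0) • u⟫
        = ⟪f x, u⟫) ∧
    -- δ_x*(u) really is the function y ↦ (1 + ∫₀^{y∧x} w⁻¹) • u
    (∀ y ∈ Ici (0:ℝ),
      (1 + ∫ s in (0:ℝ)..(min y x), (w s)⁻¹) • u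
        = u + ∫ t in (0:ℝ)..y, (if t ≤ x then (w t)⁻¹ else 0) • u) ∧
    -- squared H_w-norm of δ_x*(u) equals (1 + ∫₀^x w⁻¹)·‖u‖²
    (‖u‖ ^ 2 + ∫ s in Ioi (0:ℝ), w s * ‖(if s ≤ x then (w s)⁻¹ else 0) • u‖ ^ 2
      = (1 + ∫ s in (0:ℝ)..x, (w s)⁻¹) * ‖u‖ ^ 2) ∧
    -- the operator norm bound for δ_x : ‖f x‖² ≤ (1 + ∫₀^x w⁻¹)·‖f‖²_w
    (∀ f f' : ℝ → U,
      (∀ y ∈ Ici (0:ℝ), IntervalIntegrable f' volume 0 y) →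
      (∀ y ∈ Ici (0:ℝ), f y = f 0 + ∫ t in (0:ℝ)..y, f' t) →
      IntegrableOn (fun y => w y * ‖f' y‖ ^ 2) (Ioi 0) →
      ‖f x‖ ^ 2 ≤ (1 + ∫ s in (0:ℝ)..x, (w s)⁻¹)
        * (‖f 0‖ ^ 2 + ∫ s in Ioi (0:ℝ), w s * ‖f' s‖ ^ 2)) ∧
    (1 + ∫ s in (0:ℝ)..x, (w s)⁻¹) ≤ 1 + x := by
  have hw_one : ∀ s, 0 ≤ s → 1 ≤ w s := fun s hs => hw0 ▸ hw_mono self_mem_Ici hs hs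
  have hw_pos : ∀ s, 0 ≤ s → 0 < w s := fun s hs => one_pos.trans_le (hw_one s hs)
  have hw_ne : ∀ s, 0 < s → w s ≠ 0 := fun s hs => (hw_pos s hs.le).ne'
  have hw_inv_x : IntervalIntegrable (fun s => (w s)⁻¹) volume 0 x :=
    (intervalIntegrable_iff_integrableOn_Ioc_of_le hx).mpr (hw_inv.mono_set Ioc_subset_Ioi_self)
  refine ⟨fun f f' hf' hf _ =>
      inner_add_integral_weight_mul_inner_ite_eq u hw_ne hx (hf' x hx) (hf x hx),
    fun y hy => ?_, sq_norm_add_integral_weight_mul_sq_norm_ite u hw_ne hx,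
    fun f f' hf' hf hfw =>
      sq_norm_le_one_add_integral_inv_mul hw_pos hx hw_inv_x (hf' x hx) (hf x hx) hfw, ?_⟩
  · rw [intervalIntegral.integral_smul_const, intervalIntegral_ite_le hy hx, add_smul, one_smul]
  · have h := intervalIntegral.integral_mono_on hx hw_inv_x intervalIntegrable_const
      fun s hs => inv_le_one_of_one_le₀ (hw_one s hs.1)
    simpa [intervalIntegral.integral_const] using h

/-- the evaluation map `δ_x : H_w → U` is bounded with adjoint
`δ_x*(u)(y) = (1 + ∫₀^{y∧x} w(s)⁻¹ ds)·u`, characterized by `⟨f, δ_x* u⟩_w = ⟨f(x), u⟩_U`,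
and `‖δ_x‖²_op = ‖δ_x*‖²_op = 1 + ∫₀^x w(s)⁻¹ ds ≤ 1 + x`. -/
theorem stmt_3 {U : Type*} [NormedAddCommGroup U] [InnerProductSpace ℝ U]
    [CompleteSpace U] [SecondCountableTopology U]
    (w : ℝ → ℝ) (hw_cont : Continuous w) (hw_mono : MonotoneOn w (Ici 0))
    (hw0 : w 0 = 1)
    (hw_inv : IntegrableOn (fun s => (w s)⁻¹) (Ioi 0))
    (x : ℝ) (hx : 0 ≤ x) (u : U) :
    -- the adjoint identity ⟨f, δ_x*(u)⟩_w = ⟨δ_x f, u⟩_U for every f ∈ H_w,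
    -- where δ_x*(u) has value u at 0 and derivative y ↦ (w y)⁻¹ 1_{y ≤ x} • u
    (∀ f f' : ℝ → U,
      (∀ y ∈ Ici (0:ℝ), IntervalIntegrable f' volume 0 y) →
      (∀ y ∈ Ici (0:ℝ), f y = f 0 + ∫ t in (0:ℝ)..y, f' t) →
      IntegrableOn (fun y => w y * ‖f' y‖ ^ 2) (Ioi 0) →
      ⟪f 0, u⟫ + ∫ s in Ioi (0:ℝ), w s * ⟪f' s, (if s ≤ x then (w s)⁻¹ else 0) • u⟫
        = ⟪f x, u⟫) ∧
    -- δ_x*(u) really is the function y ↦ (1 + ∫₀^{y∧x} w⁻¹) • u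
    (∀ y ∈ Ici (0:ℝ),
      (1 + ∫ s in (0:ℝ)..(min y x), (w s)⁻¹) • u
        = u + ∫ t in (0:ℝ)..y, (if t ≤ x then (w t)⁻¹ else 0) • u) ∧
    -- squared H_w-norm of δ_x*(u) equals (1 + ∫₀^x w⁻¹)·‖u‖²
    (‖u‖ ^ 2 + ∫ s in Ioi (0:ℝ), w s * ‖(if s ≤ x then (w s)⁻¹ else 0) • u‖ ^ 2
      = (1 + ∫ s in (0:ℝ)..x, (w s)⁻¹) * ‖u‖ ^ 2) ∧
    -- the operator norm bound for δ_x : ‖f x‖² ≤ (1 + ∫₀^x w⁻¹)·‖f‖²_w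
    (∀ f f' : ℝ → U,
      (∀ y ∈ Ici (0:ℝ), IntervalIntegrable f' volume 0 y) →
      (∀ y ∈ Ici (0:ℝ), f y = f 0 + ∫ t in (0:ℝ)..y, f' t) →
      IntegrableOn (fun y => w y * ‖f' y‖ ^ 2) (Ioi 0) →
      ‖f x‖ ^ 2 ≤ (1 + ∫ s in (0:ℝ)..x, (w s)⁻¹)
        * (‖f 0‖ ^ 2 + ∫ s in Ioi (0:ℝ), w s * ‖f' s‖ ^ 2)) ∧
    (1 + ∫ s in (0:ℝ)..x, (w s)⁻¹) ≤ 1 + x :=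
  stmt_3_general w hw_mono hw0 hw_inv x hx u
end

section
/- The shift semigroup S_t : H_w → H_w, (S_t f)(x) = f(x+t), satisfies the operator norm bound ‖S_t‖_op ≤ e^{t/2} for all t ≥ 0; in particular it is quasi-contractive. -/
/-!
Since `f t = f 0 + ∫₀ᵗ f'` and `w ≥ 1`, Cauchy–Schwarz gives
`‖f t‖² ≤ (‖f 0‖ + √t √A)² ≤ (1 + t) (‖f 0‖² + A)` with `A = ∫₀ᵗ w ‖f'‖²`, i.e. `‖δ_t‖² ≤ 1 + t`.
Since `w` is non-decreasing, `w x ≤ w (x + t)`, so the weighted energy of the shifted derivative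
is at most the tail `∫ₜ^∞ w ‖f'‖²`. Adding up, `‖S_t f‖²_w ≤ (1 + t) ‖f‖²_w ≤ e^t ‖f‖²_w`.
-/

open MeasureTheory Set Filter Real

theorem add_sq_le_one_add_mul_of_sq_le_mul {a I t B : ℝ} (ht : 0 ≤ t) (hB : 0 ≤ B)
    (hI : I ^ 2 ≤ t * B) :
    (a + I) ^ 2 ≤ (1 + t) * (a ^ 2 + B) := by
  rcases ht.eq_or_lt with rfl | ht
  · nlinarith
  · have : 0 ≤ t * (t * a ^ 2 + B - 2 * a * I) := by nlinarith [sq_nonneg (t * a - I)]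
    nlinarith [nonneg_of_mul_nonneg_right this ht]

theorem sq_integral_norm_le_measureReal_mul_integral_norm_sq {α E : Type*} [MeasurableSpace α]
    [NormedAddCommGroup E] {μ : Measure α} [IsFiniteMeasure μ] {g : α → E} (hg : MemLp g 2 μ) :
    (∫ x, ‖g x‖ ∂μ) ^ 2 ≤ μ.real univ * ∫ x, ‖g x‖ ^ 2 ∂μ := by
  have holder := integral_mul_norm_le_Lp_mul_Lq (p := 2) (q := 2) (f := fun _ => (1 : ℝ))
    (g := fun x => ‖g x‖) (μ := μ) (by rw [Real.holderConjugate_iff]; norm_num) (memLp_const 1)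
    (by simpa using hg.norm)
  simp only [norm_one, one_mul, Real.rpow_two, one_pow, integral_const, smul_eq_mul, mul_one,
    norm_norm, ← Real.sqrt_eq_rpow] at holder
  calc (∫ x, ‖g x‖ ∂μ) ^ 2
      ≤ (√(μ.real univ) * √(∫ x, ‖g x‖ ^ 2 ∂μ)) ^ 2 :=
        pow_le_pow_left₀ (integral_nonneg fun _ => norm_nonneg _) holder 2
    _ = μ.real univ * ∫ x, ‖g x‖ ^ 2 ∂μ := by
        rw [mul_pow, sq_sqrt measureReal_nonneg,
          sq_sqrt (integral_nonneg fun _ => sq_nonneg _)]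

theorem norm_sq_le_one_add_mul_of_eq_add_integral {E : Type*} [NormedAddCommGroup E]
    [NormedSpace ℝ E] {f f' : ℝ → E} {t : ℝ} (ht : 0 ≤ t)
    (hf : f t = f 0 + ∫ s in 0..t, f' s) (hf' : MemLp f' 2 (volume.restrict (Ioc 0 t))) :
    ‖f t‖ ^ 2 ≤ (1 + t) * (‖f 0‖ ^ 2 + ∫ s in Ioc 0 t, ‖f' s‖ ^ 2) := by
  have hft : ‖f t‖ ≤ ‖f 0‖ + ∫ s in Ioc 0 t, ‖f' s‖ := by
    rw [hf, ← uIoc_of_le ht]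
    exact (norm_add_le _ _).trans (add_le_add_right
      intervalIntegral.norm_integral_le_integral_norm_uIoc _)
  have hCS := sq_integral_norm_le_measureReal_mul_integral_norm_sq hf'
  rw [measureReal_restrict_apply_univ, Real.volume_real_Ioc_of_le ht, sub_zero] at hCS
  calc ‖f t‖ ^ 2 ≤ (‖f 0‖ + ∫ s in Ioc 0 t, ‖f' s‖) ^ 2 := pow_le_pow_left₀ (norm_nonneg _) hft 2
    _ ≤ _ := add_sq_le_one_add_mul_of_sq_le_mul ht (integral_nonneg fun _ => sq_nonneg _) hCS

theorem integrableOn_norm_sq_of_one_le_weight {α E : Type*} [MeasurableSpace α]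
    [NormedAddCommGroup E] {μ : Measure α} {w : α → ℝ} {g : α → E} {s : Set α}
    (hs : MeasurableSet s) (hw : ∀ x ∈ s, 1 ≤ w x) (hg : AEStronglyMeasurable g (μ.restrict s))
    (hwg : IntegrableOn (fun x => w x * ‖g x‖ ^ 2) s μ) :
    IntegrableOn (fun x => ‖g x‖ ^ 2) s μ := by
  refine hwg.mono' (hg.norm.pow 2) ?_
  filter_upwards [ae_restrict_mem hs] with x hx
  rw [Real.norm_of_nonneg (sq_nonneg _)]
  exact le_mul_of_one_le_left (sq_nonneg _) (hw x hx)

theorem integrableOn_Ioi_comp_add_right_iff {E : Type*} [NormedAddCommGroup E] {F : ℝ → E}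
    (a t : ℝ) : IntegrableOn (fun x => F (x + t)) (Ioi a) ↔ IntegrableOn F (Ioi (a + t)) := by
  simpa [Function.comp_def] using
    (measurePreserving_add_right volume t).integrableOn_comp_preimage
      (measurableEmbedding_addRight t) (f := F) (s := Ioi (a + t))

theorem setIntegral_Ioi_comp_add_right {E : Type*} [NormedAddCommGroup E] [NormedSpace ℝ E]
    (F : ℝ → E) (a t : ℝ) : ∫ x in Ioi a, F (x + t) = ∫ y in Ioi (a + t), F y := by
  simpa using (measurePreserving_add_right volume t).setIntegral_preimage_emb
    (measurableEmbedding_addRight t) F (Ioi (a + t))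

theorem setIntegral_weight_mul_comp_add_le {w g : ℝ → ℝ} {t : ℝ} (ht : 0 ≤ t)
    (hw_mono : MonotoneOn w (Ici 0)) (hw_nonneg : ∀ x ∈ Ici 0, 0 ≤ w x) (hg : ∀ x, 0 ≤ g x)
    (hwg : IntegrableOn (fun y => w y * g y) (Ioi t)) :
    ∫ x in Ioi 0, w x * g (x + t) ≤ ∫ y in Ioi t, w y * g y := by
  calc ∫ x in Ioi 0, w x * g (x + t) ≤ ∫ x in Ioi 0, w (x + t) * g (x + t) := by
        refine integral_mono_of_nonneg ?_ ?_ ?_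
        · filter_upwards [ae_restrict_mem measurableSet_Ioi] with x hx
          exact mul_nonneg (hw_nonneg x (mem_Ici.2 (le_of_lt hx))) (hg _)
        · exact (integrableOn_Ioi_comp_add_right_iff 0 t).2 (by simpa using hwg)
        · filter_upwards [ae_restrict_mem measurableSet_Ioi] with x hx
          have hx : (0 : ℝ) ≤ x := le_of_lt hx
          exact mul_le_mul_of_nonneg_right
            (hw_mono hx (by simp only [mem_Ici]; linarith) (by linarith)) (hg _)
    _ = ∫ y in Ioi t, w y * g y := by
        simpa using setIntegral_Ioi_comp_add_right (fun y => w y * g y) 0 t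

theorem stmt_4_general {U : Type*} [NormedAddCommGroup U] [InnerProductSpace ℝ U]
    (w : ℝ → ℝ) (hw_mono : MonotoneOn w (Ici 0))
    (hw0 : w 0 = 1)
    (t : ℝ) (ht : 0 ≤ t)
    (f f' : ℝ → U)
    (hf_loc : ∀ y ∈ Ici (0:ℝ), IntervalIntegrable f' volume 0 y)
    (hf_ac : ∀ y ∈ Ici (0:ℝ), f y = f 0 + ∫ s in (0:ℝ)..y, f' s)
    (hf_w : IntegrableOn (fun y => w y * ‖f' y‖ ^ 2) (Ioi 0)) :
    ‖f t‖ ^ 2 + ∫ x in Ioi (0:ℝ), w x * ‖f' (x + t)‖ ^ 2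
      ≤ Real.exp t * (‖f 0‖ ^ 2 + ∫ x in Ioi (0:ℝ), w x * ‖f' x‖ ^ 2) := by
  have hw_one : ∀ x ∈ Ici (0 : ℝ), 1 ≤ w x := fun x hx => hw0 ▸ hw_mono self_mem_Ici hx hx
  have hw_nonneg : ∀ x ∈ Ici (0 : ℝ), 0 ≤ w x := fun x hx => zero_le_one.trans (hw_one x hx)
  have hf'_meas : AEStronglyMeasurable f' (volume.restrict (Ioc 0 t)) :=
    ((intervalIntegrable_iff_integrableOn_Ioc_of_le ht).1 (hf_loc t ht)).1
  have hw_Ioc : ∀ x ∈ Ioc 0 t, 1 ≤ w x := fun x hx => hw_one x (mem_Ici.2 hx.1.le)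
  have hA := hf_w.mono_set (Ioc_subset_Ioi_self : Ioc 0 t ⊆ Ioi 0)
  have hC := hf_w.mono_set (Ioi_subset_Ioi ht)
  have hsq := integrableOn_norm_sq_of_one_le_weight measurableSet_Ioc hw_Ioc hf'_meas hA
  have heval : ‖f t‖ ^ 2 ≤ (1 + t) * (‖f 0‖ ^ 2 + ∫ y in Ioc 0 t, w y * ‖f' y‖ ^ 2) := by
    refine (norm_sq_le_one_add_mul_of_eq_add_integral ht (hf_ac t ht)
      ((memLp_two_iff_integrable_sq_norm hf'_meas).2 hsq)).trans ?_
    refine mul_le_mul_of_nonneg_left (add_le_add_right ?_ _) (by linarith)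
    exact setIntegral_mono_on hsq hA measurableSet_Ioc fun x hx =>
      le_mul_of_one_le_left (sq_nonneg _) (hw_Ioc x hx)
  have hshift := setIntegral_weight_mul_comp_add_le ht hw_mono hw_nonneg (fun _ => sq_nonneg _) hC
  have hsplit : ∫ y in Ioi 0, w y * ‖f' y‖ ^ 2
      = (∫ y in Ioc 0 t, w y * ‖f' y‖ ^ 2) + ∫ y in Ioi t, w y * ‖f' y‖ ^ 2 := by
    rw [← setIntegral_union (Ioc_disjoint_Ioi le_rfl) measurableSet_Ioi hA hC,
      Ioc_union_Ioi_eq_Ioi ht]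
  have hnonneg : ∀ s ⊆ Ioi (0 : ℝ), MeasurableSet s → 0 ≤ ∫ y in s, w y * ‖f' y‖ ^ 2 :=
    fun s hs hms => setIntegral_nonneg hms fun x hx =>
      mul_nonneg (hw_nonneg x (mem_Ici.2 (hs hx).le)) (sq_nonneg _)
  calc _ ≤ (1 + t) * (‖f 0‖ ^ 2 + ∫ y in Ioc 0 t, w y * ‖f' y‖ ^ 2)
        + ∫ y in Ioi t, w y * ‖f' y‖ ^ 2 := add_le_add heval hshift
    _ ≤ (1 + t) * (‖f 0‖ ^ 2 + ∫ y in Ioi 0, w y * ‖f' y‖ ^ 2) := by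
        rw [hsplit]
        nlinarith [hnonneg _ (Ioi_subset_Ioi ht) measurableSet_Ioi]
    _ ≤ _ := mul_le_mul_of_nonneg_right (by linarith [add_one_le_exp t])
        (add_nonneg (sq_nonneg _) (hnonneg _ subset_rfl measurableSet_Ioi))

/-- the shift semigroup `(S_t f)(x) = f(x+t)` on `H_w` satisfies
`‖S_t f‖²_w ≤ e^t ‖f‖²_w`, i.e. `‖S_t‖_op ≤ e^{t/2}`; in particular it is quasi-contractive.
Here `S_t f` has value `f t` at `0` and derivative `x ↦ f'(x+t)`. -/
theorem stmt_4 {U : Type*} [NormedAddCommGroup U] [InnerProductSpace ℝ U]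
    [CompleteSpace U] [SecondCountableTopology U]
    (w : ℝ → ℝ) (hw_cont : Continuous w) (hw_mono : MonotoneOn w (Ici 0))
    (hw0 : w 0 = 1)
    (hw_inv : IntegrableOn (fun s => (w s)⁻¹) (Ioi 0))
    (t : ℝ) (ht : 0 ≤ t)
    (f f' : ℝ → U)
    (hf_loc : ∀ y ∈ Ici (0:ℝ), IntervalIntegrable f' volume 0 y)
    (hf_ac : ∀ y ∈ Ici (0:ℝ), f y = f 0 + ∫ s in (0:ℝ)..y, f' s)
    (hf_w : IntegrableOn (fun y => w y * ‖f' y‖ ^ 2) (Ioi 0)) :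
    ‖f t‖ ^ 2 + ∫ x in Ioi (0:ℝ), w x * ‖f' (x + t)‖ ^ 2
      ≤ Real.exp t * (‖f 0‖ ^ 2 + ∫ x in Ioi (0:ℝ), w x * ‖f' x‖ ^ 2) :=
  stmt_4_general w hw_mono hw0 t ht f f' hf_loc hf_ac hf_w
end

section
/- With respect to the norm ‖·‖_{w,∞}, the adjoint of δ₀ : H_w → U is u ↦ (x ↦ (1 + ∫_x^∞ w(s)⁻¹ ds)·u), and ‖δ₀‖²_op = 1 + ∫₀^∞ w(s)⁻¹ ds. Moreover the restriction of δ₀ to H_w⁰ = {h : h(∞)=0} has operator norm squared equal to ∫₀^∞ w(s)⁻¹ ds, with adjoint u ↦ (x ↦ (∫_x^∞ w(s)⁻¹ ds)·u). -/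
/-!
The derivative of `φ(u)` is `-w⁻¹ • u`, so `⟨φ(u), f⟩_{w,∞} = ⟨u, f(∞)⟩ - ⟨u, ∫₀^∞ f'⟩`, which is
`⟨u, f(0)⟩` by the fundamental theorem of calculus on the half-line. The improper integral of `f'`
converges absolutely by the weighted Cauchy–Schwarz inequality
`(∫ ‖f'‖)² ≤ (∫ w⁻¹) (∫ w ‖f'‖²)`, which also bounds `‖f(0) - f(∞)‖` and hence `‖δ₀‖`; the bounds
are attained at `φ(u)` and `ψ(u)`, whose norms are computed directly.
-/

open MeasureTheory Set Filter Real
open scoped RealInnerProductSpace Topology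

section WeightedCauchySchwarz

variable {α E : Type*} [MeasurableSpace α] {μ : Measure α} [NormedAddCommGroup E]
  {w : α → ℝ} {g : α → E}

lemma aemeasurable_of_integrable_inv (hw_inv : Integrable (fun x => (w x)⁻¹) μ) :
    AEMeasurable w μ :=
  hw_inv.aemeasurable.inv.congr (.of_forall fun x => inv_inv (w x))

lemma sqrt_inv_sq_ae_eq (hw : ∀ᵐ x ∂μ, 0 < w x) :
    (fun x => √(w x)⁻¹ ^ 2) =ᵐ[μ] fun x => (w x)⁻¹ := by
  filter_upwards [hw] with x hx
  exact sq_sqrt (inv_nonneg.2 hx.le)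

lemma sqrt_mul_norm_sq_ae_eq (hw : ∀ᵐ x ∂μ, 0 < w x) :
    (fun x => (√(w x) * ‖g x‖) ^ 2) =ᵐ[μ] fun x => w x * ‖g x‖ ^ 2 := by
  filter_upwards [hw] with x hx
  rw [mul_pow, sq_sqrt hx.le]

lemma sqrt_inv_mul_sqrt_mul_norm_ae_eq (hw : ∀ᵐ x ∂μ, 0 < w x) :
    (fun x => √(w x)⁻¹ * (√(w x) * ‖g x‖)) =ᵐ[μ] fun x => ‖g x‖ := by
  filter_upwards [hw] with x hx
  rw [sqrt_inv, inv_mul_cancel_left₀ (sqrt_pos.2 hx).ne']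

lemma memLp_two_sqrt_inv (hw : ∀ᵐ x ∂μ, 0 < w x) (hw_inv : Integrable (fun x => (w x)⁻¹) μ) :
    MemLp (fun x => √(w x)⁻¹) 2 μ :=
  (memLp_two_iff_integrable_sq hw_inv.aemeasurable.sqrt.aestronglyMeasurable).2
    (hw_inv.congr (sqrt_inv_sq_ae_eq hw).symm)

lemma memLp_two_sqrt_mul_norm (hw : ∀ᵐ x ∂μ, 0 < w x) (hw_inv : Integrable (fun x => (w x)⁻¹) μ)
    (hg : AEStronglyMeasurable g μ) (hwg : Integrable (fun x => w x * ‖g x‖ ^ 2) μ) :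
    MemLp (fun x => √(w x) * ‖g x‖) 2 μ :=
  (memLp_two_iff_integrable_sq
    ((aemeasurable_of_integrable_inv hw_inv).sqrt.aestronglyMeasurable.mul hg.norm)).2
    (hwg.congr (sqrt_mul_norm_sq_ae_eq hw).symm)

lemma integrable_of_integrable_inv_of_integrable_mul_norm_sq (hw : ∀ᵐ x ∂μ, 0 < w x)
    (hw_inv : Integrable (fun x => (w x)⁻¹) μ) (hg : AEStronglyMeasurable g μ)
    (hwg : Integrable (fun x => w x * ‖g x‖ ^ 2) μ) : Integrable g μ :=
  (integrable_norm_iff hg).1 <| ((memLp_two_sqrt_inv hw hw_inv).integrable_mul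
    (memLp_two_sqrt_mul_norm hw hw_inv hg hwg)).congr (sqrt_inv_mul_sqrt_mul_norm_ae_eq hw)

lemma sq_integral_norm_le_integral_inv_mul (hw : ∀ᵐ x ∂μ, 0 < w x)
    (hw_inv : Integrable (fun x => (w x)⁻¹) μ) (hg : AEStronglyMeasurable g μ)
    (hwg : Integrable (fun x => w x * ‖g x‖ ^ 2) μ) :
    (∫ x, ‖g x‖ ∂μ) ^ 2 ≤ (∫ x, (w x)⁻¹ ∂μ) * ∫ x, w x * ‖g x‖ ^ 2 ∂μ := by
  have holder := integral_mul_le_Lp_mul_Lq_of_nonneg Real.HolderConjugate.two_two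
    (.of_forall fun x => sqrt_nonneg _)
    (.of_forall fun x => mul_nonneg (sqrt_nonneg _) (norm_nonneg _))
    (by rw [ENNReal.ofReal_ofNat]; exact memLp_two_sqrt_inv hw hw_inv)
    (by rw [ENNReal.ofReal_ofNat]; exact memLp_two_sqrt_mul_norm hw hw_inv hg hwg)
  simp only [rpow_two, ← sqrt_eq_rpow] at holder
  rw [integral_congr_ae (sqrt_inv_mul_sqrt_mul_norm_ae_eq hw),
    integral_congr_ae (sqrt_inv_sq_ae_eq hw), integral_congr_ae (sqrt_mul_norm_sq_ae_eq hw)]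
    at holder
  calc (∫ x, ‖g x‖ ∂μ) ^ 2
      ≤ (√(∫ x, (w x)⁻¹ ∂μ) * √(∫ x, w x * ‖g x‖ ^ 2 ∂μ)) ^ 2 :=
        pow_le_pow_left₀ (integral_nonneg fun x => norm_nonneg _) holder 2
    _ = (∫ x, (w x)⁻¹ ∂μ) * ∫ x, w x * ‖g x‖ ^ 2 ∂μ := by
        rw [mul_pow, sq_sqrt (integral_nonneg_of_ae (hw.mono fun x hx => inv_nonneg.2 hx.le)),
          sq_sqrt (integral_nonneg_of_ae (hw.mono fun x hx => mul_nonneg hx.le (sq_nonneg _)))]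

end WeightedCauchySchwarz

section WeightedIdentities

variable {α U : Type*} [MeasurableSpace α] {μ : Measure α} [NormedAddCommGroup U]
  [InnerProductSpace ℝ U] {w : α → ℝ}

lemma integral_mul_norm_neg_inv_smul_sq (u : U) :
    ∫ x, w x * ‖-(w x)⁻¹ • u‖ ^ 2 ∂μ = (∫ x, (w x)⁻¹ ∂μ) * ‖u‖ ^ 2 := by
  rw [← integral_mul_const]
  congr 1 with x
  rw [norm_smul, norm_neg, norm_inv, Real.norm_eq_abs, mul_pow, inv_pow, sq_abs, ← mul_assoc]
  rcases eq_or_ne (w x) 0 with hx | hx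
  · simp [hx]
  · field_simp

lemma integral_mul_inner_neg_inv_smul [CompleteSpace U] (hw : ∀ᵐ x ∂μ, w x ≠ 0) {g : α → U}
    (hg : Integrable g μ) (u : U) :
    ∫ x, w x * ⟪-(w x)⁻¹ • u, g x⟫ ∂μ = -⟪u, ∫ x, g x ∂μ⟫ := by
  rw [← integral_inner hg, ← integral_neg]
  refine integral_congr_ae ?_
  filter_upwards [hw] with x hx
  rw [real_inner_smul_left, neg_mul, mul_neg, mul_inv_cancel_left₀ hx]

end WeightedIdentities

section HalfLine

variable {E : Type*} [NormedAddCommGroup E] {μ : Measure ℝ} {a : ℝ}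
  {f f' : ℝ → E} {L : E}

lemma aestronglyMeasurable_restrict_Ioi_of_intervalIntegrable_s9
    (hf : ∀ b ∈ Ici a, IntervalIntegrable f μ a b) :
    AEStronglyMeasurable f (μ.restrict (Ioi a)) := by
  have hcover : AECover (μ.restrict (Ioi a)) atTop fun n : ℕ => Iic (a + n) :=
    aecover_Iic (tendsto_atTop_add_const_left _ a tendsto_natCast_atTop_atTop)
  refine hcover.aestronglyMeasurable fun n => ?_
  rw [Measure.restrict_restrict measurableSet_Iic, Iic_inter_Ioi]
  exact (hf _ (by simp)).1.aestronglyMeasurable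

lemma integral_Ioi_eq_sub_of_tendsto [NormedSpace ℝ E] [CompleteSpace E]
    (hf : ∀ b ∈ Ici a, f b = f a + ∫ s in a..b, f' s ∂μ) (hf' : IntegrableOn f' (Ioi a) μ)
    (hL : Tendsto f atTop (𝓝 L)) : ∫ x in Ioi a, f' x ∂μ = L - f a := by
  refine tendsto_nhds_unique (intervalIntegral_tendsto_integral_Ioi a hf' tendsto_id) ?_
  refine (hL.sub_const (f a)).congr' ?_
  filter_upwards [eventually_ge_atTop a] with b hb
  rw [hf b hb, add_sub_cancel_left, id]

end HalfLine

/-- `f ∈ H_w` with a.e. derivative `f'` and `f(∞) = L`. -/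
structure MemWeightedH1 {E : Type*} [NormedAddCommGroup E] [NormedSpace ℝ E] (w : ℝ → ℝ)
    (f f' : ℝ → E) (L : E) : Prop where
  intervalIntegrable : ∀ y ∈ Ici (0:ℝ), IntervalIntegrable f' volume 0 y
  eq_add_integral : ∀ y ∈ Ici (0:ℝ), f y = f 0 + ∫ s in (0:ℝ)..y, f' s
  integrableOn_mul_norm_sq : IntegrableOn (fun y => w y * ‖f' y‖ ^ 2) (Ioi 0)
  tendsto : Tendsto f atTop (𝓝 L)

namespace MemWeightedH1

variable {E : Type*} [NormedAddCommGroup E] [NormedSpace ℝ E] {w : ℝ → ℝ} {f f' : ℝ → E} {L : E}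

lemma integrableOn_deriv (hf : MemWeightedH1 w f f' L) (hw : ∀ x ∈ Ioi (0:ℝ), 0 < w x)
    (hw_inv : IntegrableOn (fun x => (w x)⁻¹) (Ioi 0)) : IntegrableOn f' (Ioi 0) :=
  integrable_of_integrable_inv_of_integrable_mul_norm_sq
    (ae_restrict_of_forall_mem measurableSet_Ioi hw) hw_inv
    (aestronglyMeasurable_restrict_Ioi_of_intervalIntegrable_s9 hf.intervalIntegrable)
    hf.integrableOn_mul_norm_sq

lemma integral_deriv [CompleteSpace E] (hf : MemWeightedH1 w f f' L)
    (hw : ∀ x ∈ Ioi (0:ℝ), 0 < w x) (hw_inv : IntegrableOn (fun x => (w x)⁻¹) (Ioi 0)) :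
    ∫ x in Ioi (0:ℝ), f' x = L - f 0 :=
  integral_Ioi_eq_sub_of_tendsto hf.eq_add_integral (hf.integrableOn_deriv hw hw_inv) hf.tendsto

lemma sq_norm_sub_le [CompleteSpace E] (hf : MemWeightedH1 w f f' L)
    (hw : ∀ x ∈ Ioi (0:ℝ), 0 < w x) (hw_inv : IntegrableOn (fun x => (w x)⁻¹) (Ioi 0)) :
    ‖L - f 0‖ ^ 2 ≤ (∫ x in Ioi (0:ℝ), (w x)⁻¹) * ∫ x in Ioi (0:ℝ), w x * ‖f' x‖ ^ 2 := by
  rw [← hf.integral_deriv hw hw_inv]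
  refine (pow_le_pow_left₀ (norm_nonneg _) (norm_integral_le_integral_norm _) 2).trans ?_
  exact sq_integral_norm_le_integral_inv_mul (ae_restrict_of_forall_mem measurableSet_Ioi hw)
    hw_inv (aestronglyMeasurable_restrict_Ioi_of_intervalIntegrable_s9 hf.intervalIntegrable)
    hf.integrableOn_mul_norm_sq

end MemWeightedH1

lemma sq_add_le_one_add_mul_sq_add {a c A B : ℝ} (hA : 0 ≤ A) (hB : 0 ≤ B) (h : c ^ 2 ≤ A * B) :
    (a + c) ^ 2 ≤ (1 + A) * (a ^ 2 + B) := by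
  have h2ac : 2 * a * c ≤ B + A * a ^ 2 := by
    refine le_of_pow_le_pow_left₀ two_ne_zero (by positivity) ?_
    nlinarith [mul_le_mul_of_nonneg_left h (sq_nonneg a), sq_nonneg (B - A * a ^ 2)]
  nlinarith

theorem stmt_9_general {U : Type*} [NormedAddCommGroup U] [InnerProductSpace ℝ U]
    [CompleteSpace U]
    (w : ℝ → ℝ) (hw_mono : MonotoneOn w (Ici 0))
    (hw0 : w 0 = 1)
    (hw_inv : IntegrableOn (fun s => (w s)⁻¹) (Ioi 0)) (u : U) :
    -- φ(u) tends to u at infinity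
    (Tendsto (fun x : ℝ => (1 + ∫ s in Ioi x, (w s)⁻¹) • u) atTop (nhds u)) ∧
    -- adjoint identity for δ₀ on H_w : ⟨φ(u), f⟩_{w,∞} = ⟨u, f(0)⟩
    (∀ (f f' : ℝ → U) (L : U),
      (∀ y ∈ Ici (0:ℝ), IntervalIntegrable f' volume 0 y) →
      (∀ y ∈ Ici (0:ℝ), f y = f 0 + ∫ s in (0:ℝ)..y, f' s) →
      IntegrableOn (fun y => w y * ‖f' y‖ ^ 2) (Ioi 0) →
      Tendsto f atTop (nhds L) →
      ⟪u, L⟫ + ∫ x in Ioi (0:ℝ), w x * ⟪-((w x)⁻¹) • u, f' x⟫ = ⟪u, f 0⟫) ∧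
    -- ‖φ(u)‖²_{w,∞} = (1 + ∫₀^∞ w⁻¹)‖u‖² , which gives ‖δ₀‖²_op = 1 + ∫₀^∞ w⁻¹
    (‖u‖ ^ 2 + ∫ x in Ioi (0:ℝ), w x * ‖-((w x)⁻¹) • u‖ ^ 2
      = (1 + ∫ s in Ioi (0:ℝ), (w s)⁻¹) * ‖u‖ ^ 2) ∧
    (∀ (f f' : ℝ → U) (L : U),
      (∀ y ∈ Ici (0:ℝ), IntervalIntegrable f' volume 0 y) →
      (∀ y ∈ Ici (0:ℝ), f y = f 0 + ∫ s in (0:ℝ)..y, f' s) →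
      IntegrableOn (fun y => w y * ‖f' y‖ ^ 2) (Ioi 0) →
      Tendsto f atTop (nhds L) →
      ‖f 0‖ ^ 2 ≤ (1 + ∫ s in Ioi (0:ℝ), (w s)⁻¹)
        * (‖L‖ ^ 2 + ∫ x in Ioi (0:ℝ), w x * ‖f' x‖ ^ 2)) ∧
    -- ψ(u) vanishes at infinity
    (Tendsto (fun x : ℝ => (∫ s in Ioi x, (w s)⁻¹) • u) atTop (nhds (0:U))) ∧
    -- adjoint identity for δ₀ restricted to H_w⁰ and its operator norm
    (∀ (f f' : ℝ → U),
      (∀ y ∈ Ici (0:ℝ), IntervalIntegrable f' volume 0 y) →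
      (∀ y ∈ Ici (0:ℝ), f y = f 0 + ∫ s in (0:ℝ)..y, f' s) →
      IntegrableOn (fun y => w y * ‖f' y‖ ^ 2) (Ioi 0) →
      Tendsto f atTop (nhds (0:U)) →
      (∫ x in Ioi (0:ℝ), w x * ⟪-((w x)⁻¹) • u, f' x⟫ = ⟪u, f 0⟫) ∧
      ‖f 0‖ ^ 2 ≤ (∫ s in Ioi (0:ℝ), (w s)⁻¹)
        * (∫ x in Ioi (0:ℝ), w x * ‖f' x‖ ^ 2)) ∧
    (∫ x in Ioi (0:ℝ), w x * ‖-((w x)⁻¹) • u‖ ^ 2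
      = (∫ s in Ioi (0:ℝ), (w s)⁻¹) * ‖u‖ ^ 2) := by
  have hw : ∀ x ∈ Ioi (0:ℝ), 0 < w x := fun x (hx : 0 < x) =>
    one_pos.trans_le (hw0 ▸ hw_mono self_mem_Ici hx.le hx.le)
  have hA : 0 ≤ ∫ s in Ioi (0:ℝ), (w s)⁻¹ :=
    setIntegral_nonneg measurableSet_Ioi fun x hx => inv_nonneg.2 (hw x hx).le
  have adjoint {f f' : ℝ → U} {L : U} (hf : MemWeightedH1 w f f' L) :
      ∫ x in Ioi (0:ℝ), w x * ⟪-((w x)⁻¹) • u, f' x⟫ = ⟪u, f 0⟫ - ⟪u, L⟫ := by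
    rw [integral_mul_inner_neg_inv_smul
        (ae_restrict_of_forall_mem measurableSet_Ioi fun x hx => (hw x hx).ne')
        (hf.integrableOn_deriv hw hw_inv),
      hf.integral_deriv hw hw_inv, inner_sub_right, neg_sub]
  have tail := tendsto_integral_Ioi_zero (f := fun s => (w s)⁻¹) (μ := volume) tendsto_id
  refine ⟨?_, fun f f' L h1 h2 h3 h4 => ?_, ?_, fun f f' L h1 h2 h3 h4 => ?_, ?_,
    fun f f' h1 h2 h3 h4 => ⟨?_, ?_⟩, integral_mul_norm_neg_inv_smul_sq u⟩
  · simpa using (tail.const_add 1).smul_const u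
  · rw [adjoint ⟨h1, h2, h3, h4⟩, add_sub_cancel]
  · rw [integral_mul_norm_neg_inv_smul_sq]
    ring
  · have hB : 0 ≤ ∫ x in Ioi (0:ℝ), w x * ‖f' x‖ ^ 2 :=
      setIntegral_nonneg measurableSet_Ioi fun x hx => mul_nonneg (hw x hx).le (sq_nonneg _)
    exact (pow_le_pow_left₀ (norm_nonneg _) (norm_le_norm_add_norm_sub L (f 0)) 2).trans
      (sq_add_le_one_add_mul_sq_add hA hB (MemWeightedH1.sq_norm_sub_le ⟨h1, h2, h3, h4⟩ hw hw_inv))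
  · simpa using tail.smul_const u
  · simpa using adjoint ⟨h1, h2, h3, h4⟩
  · simpa using MemWeightedH1.sq_norm_sub_le ⟨h1, h2, h3, h4⟩ hw hw_inv

/-- with respect to `‖·‖_{w,∞}`, the adjoint of `δ₀ : H_w → U` is
`φ : u ↦ (x ↦ (1 + ∫_x^∞ w(s)⁻¹ ds)·u)` (value at `∞` equal to `u`, derivative
`x ↦ −(w x)⁻¹ • u`), with `‖δ₀‖²_op = 1 + ∫₀^∞ w⁻¹`; the restriction of `δ₀` to
`H_w⁰ = {h : h(∞) = 0}` has adjoint `ψ : u ↦ (x ↦ (∫_x^∞ w(s)⁻¹ ds)·u)` and operator norm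
squared `∫₀^∞ w⁻¹`. -/
theorem stmt_9 {U : Type*} [NormedAddCommGroup U] [InnerProductSpace ℝ U]
    [CompleteSpace U] [SecondCountableTopology U]
    (w : ℝ → ℝ) (hw_cont : Continuous w) (hw_mono : MonotoneOn w (Ici 0))
    (hw0 : w 0 = 1)
    (hw_inv : IntegrableOn (fun s => (w s)⁻¹) (Ioi 0)) (u : U) :
    -- φ(u) tends to u at infinity
    (Tendsto (fun x : ℝ => (1 + ∫ s in Ioi x, (w s)⁻¹) • u) atTop (nhds u)) ∧
    -- adjoint identity for δ₀ on H_w : ⟨φ(u), f⟩_{w,∞} = ⟨u, f(0)⟩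
    (∀ (f f' : ℝ → U) (L : U),
      (∀ y ∈ Ici (0:ℝ), IntervalIntegrable f' volume 0 y) →
      (∀ y ∈ Ici (0:ℝ), f y = f 0 + ∫ s in (0:ℝ)..y, f' s) →
      IntegrableOn (fun y => w y * ‖f' y‖ ^ 2) (Ioi 0) →
      Tendsto f atTop (nhds L) →
      ⟪u, L⟫ + ∫ x in Ioi (0:ℝ), w x * ⟪-((w x)⁻¹) • u, f' x⟫ = ⟪u, f 0⟫) ∧
    -- ‖φ(u)‖²_{w,∞} = (1 + ∫₀^∞ w⁻¹)‖u‖² , which gives ‖δ₀‖²_op = 1 + ∫₀^∞ w⁻¹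
    (‖u‖ ^ 2 + ∫ x in Ioi (0:ℝ), w x * ‖-((w x)⁻¹) • u‖ ^ 2
      = (1 + ∫ s in Ioi (0:ℝ), (w s)⁻¹) * ‖u‖ ^ 2) ∧
    (∀ (f f' : ℝ → U) (L : U),
      (∀ y ∈ Ici (0:ℝ), IntervalIntegrable f' volume 0 y) →
      (∀ y ∈ Ici (0:ℝ), f y = f 0 + ∫ s in (0:ℝ)..y, f' s) →
      IntegrableOn (fun y => w y * ‖f' y‖ ^ 2) (Ioi 0) →
      Tendsto f atTop (nhds L) →
      ‖f 0‖ ^ 2 ≤ (1 + ∫ s in Ioi (0:ℝ), (w s)⁻¹)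
        * (‖L‖ ^ 2 + ∫ x in Ioi (0:ℝ), w x * ‖f' x‖ ^ 2)) ∧
    -- ψ(u) vanishes at infinity
    (Tendsto (fun x : ℝ => (∫ s in Ioi x, (w s)⁻¹) • u) atTop (nhds (0:U))) ∧
    -- adjoint identity for δ₀ restricted to H_w⁰ and its operator norm
    (∀ (f f' : ℝ → U),
      (∀ y ∈ Ici (0:ℝ), IntervalIntegrable f' volume 0 y) →
      (∀ y ∈ Ici (0:ℝ), f y = f 0 + ∫ s in (0:ℝ)..y, f' s) →
      IntegrableOn (fun y => w y * ‖f' y‖ ^ 2) (Ioi 0) →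
      Tendsto f atTop (nhds (0:U)) →
      (∫ x in Ioi (0:ℝ), w x * ⟪-((w x)⁻¹) • u, f' x⟫ = ⟪u, f 0⟫) ∧
      ‖f 0‖ ^ 2 ≤ (∫ s in Ioi (0:ℝ), (w s)⁻¹)
        * (∫ x in Ioi (0:ℝ), w x * ‖f' x‖ ^ 2)) ∧
    (∫ x in Ioi (0:ℝ), w x * ‖-((w x)⁻¹) • u‖ ^ 2
      = (∫ s in Ioi (0:ℝ), (w s)⁻¹) * ‖u‖ ^ 2) :=
  stmt_9_general w hw_mono hw0 hw_inv u
end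

section
/- Let π₀ be an orthogonal projection on a Hilbert space H and (S_t) a C₀-semigroup with ‖π₀ S_t g‖ ≤ e^{γt/2}‖π₀ g‖ for all g ∈ H and t ≥ 0, where γ ≥ 0. Then for the Yosida approximation A_n (n > γ/2): ⟨π₀ A_n h, h⟩ ≤ (γ/(2 − γ/n))‖π₀ h‖² for all h ∈ H. -/
/-!
Since `π₀` is an orthogonal projection, `⟪π₀ (S_t h - h), h⟫ = ⟪π₀ (S_t h) - π₀ h, π₀ h⟫`, and
Cauchy–Schwarz with the growth bound on `π₀ S_t` gives `≤ (e^{γt/2} - 1)‖π₀ h‖²`. Integrating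
against `n² e^{-nt}` bounds `⟪π₀ A_n h, h⟫` by the Yosida approximation of the scalar semigroup
`e^{γt/2}`, namely `n² (1/(n - γ/2) - 1/n) = γ/(2 - γ/n)`.
-/

open MeasureTheory Set Filter Real
open scoped RealInnerProductSpace

section Projection

variable {E : Type*} [NormedAddCommGroup E] [InnerProductSpace ℝ E]

lemma inner_map_right_eq_inner_map_map {P : E →L[ℝ] E} (hidem : ∀ x, P (P x) = P x)
    (hsa : ∀ x y, ⟪P x, y⟫ = ⟪x, P y⟫) (x y : E) : ⟪x, P y⟫ = ⟪P x, P y⟫ := by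
  rw [hsa, hidem]

lemma real_inner_sub_le_of_norm_le {x y : E} {c : ℝ} (h : ‖x‖ ≤ c * ‖y‖) :
    ⟪x - y, y⟫ ≤ (c - 1) * ‖y‖ ^ 2 := by
  have hxy : ⟪x, y⟫ ≤ ‖x‖ * ‖y‖ := real_inner_le_norm x y
  rw [inner_sub_left, real_inner_self_eq_norm_sq]
  nlinarith [norm_nonneg y]

end Projection

section ScalarYosida

variable {γ n : ℝ}

lemma exp_neg_mul_mul_exp_sub_one (t : ℝ) :
    exp (-(n * t)) * (exp (γ * t / 2) - 1) = exp ((γ / 2 - n) * t) - exp (-n * t) := by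
  rw [mul_sub, mul_one, ← exp_add]
  ring_nf

lemma integrableOn_exp_neg_mul_mul_exp_sub_one (hn : 0 < n) (hnγ : γ / 2 < n) :
    IntegrableOn (fun t => exp (-(n * t)) * (exp (γ * t / 2) - 1)) (Ioi 0) := by
  simp_rw [exp_neg_mul_mul_exp_sub_one]
  exact (integrableOn_exp_mul_Ioi (by linarith) 0).sub (integrableOn_exp_mul_Ioi (by linarith) 0)

lemma sq_mul_integral_exp_neg_mul_mul_exp_sub_one (hn : 0 < n) (hnγ : γ / 2 < n) :
    n ^ 2 * ∫ t in Ioi 0, exp (-(n * t)) * (exp (γ * t / 2) - 1) = γ / (2 - γ / n) := by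
  have hγn : γ / 2 - n < 0 := by linarith
  have hn' : -n < 0 := by linarith
  simp_rw [exp_neg_mul_mul_exp_sub_one]
  rw [integral_sub (integrableOn_exp_mul_Ioi hγn 0) (integrableOn_exp_mul_Ioi hn' 0),
    integral_exp_mul_Ioi hγn, integral_exp_mul_Ioi hn']
  simp only [mul_zero, exp_zero]
  have hd : 2 * n - γ ≠ 0 := by linarith
  rw [show γ / 2 - n = -(2 * n - γ) / 2 by ring, show 2 - γ / n = (2 * n - γ) / n by field_simp]
  field_simp
  linear_combination mul_inv_cancel₀ hd

end ScalarYosida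

theorem stmt_13_general {H : Type*} [NormedAddCommGroup H] [InnerProductSpace ℝ H]
    [CompleteSpace H]
    (S : ℝ → H →L[ℝ] H)
    (π₀ : H →L[ℝ] H)
    (hidem : ∀ x : H, π₀ (π₀ x) = π₀ x)
    (hsa : ∀ x y : H, ⟪π₀ x, y⟫ = ⟪x, π₀ y⟫)
    (γ : ℝ)
    (hbound : ∀ t ≥ (0:ℝ), ∀ g : H, ‖π₀ (S t g)‖ ≤ Real.exp (γ * t / 2) * ‖π₀ g‖)
    (n : ℝ) (hn : 0 < n) (hnγ : γ / 2 < n)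
    (hInt : ∀ h : H, IntegrableOn (fun t => Real.exp (-(n * t)) • (S t h - h)) (Ioi 0)) :
    ∀ h : H,
      ⟪π₀ (n ^ 2 • ∫ t in Ioi (0:ℝ), Real.exp (-(n * t)) • (S t h - h)), h⟫
        ≤ (γ / (2 - γ / n)) * ‖π₀ h‖ ^ 2 := by
  intro h
  have hpointwise : ∀ t ∈ Ioi (0:ℝ), ⟪exp (-(n * t)) • (S t h - h), π₀ h⟫
      ≤ exp (-(n * t)) * (exp (γ * t / 2) - 1) * ‖π₀ h‖ ^ 2 := by
    intro t ht
    rw [real_inner_smul_left, inner_map_right_eq_inner_map_map hidem hsa, map_sub, mul_assoc]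
    exact mul_le_mul_of_nonneg_left
      (real_inner_sub_le_of_norm_le (hbound t (le_of_lt ht) h)) (exp_pos _).le
  calc ⟪π₀ (n ^ 2 • ∫ t in Ioi (0:ℝ), Real.exp (-(n * t)) • (S t h - h)), h⟫
      = n ^ 2 * ∫ t in Ioi (0:ℝ), ⟪exp (-(n * t)) • (S t h - h), π₀ h⟫ := by
        rw [hsa, real_inner_smul_left, real_inner_comm, ← integral_inner (hInt h)]
        simp_rw [real_inner_comm (π₀ h)]
    _ ≤ n ^ 2 * ∫ t in Ioi (0:ℝ), exp (-(n * t)) * (exp (γ * t / 2) - 1) * ‖π₀ h‖ ^ 2 := by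
        refine mul_le_mul_of_nonneg_left ?_ (sq_nonneg n)
        exact setIntegral_mono_on ((hInt h).inner_const (𝕜 := ℝ) (π₀ h))
          ((integrableOn_exp_neg_mul_mul_exp_sub_one hn hnγ).mul_const _) measurableSet_Ioi
          hpointwise
    _ = γ / (2 - γ / n) * ‖π₀ h‖ ^ 2 := by
        rw [integral_mul_const, ← mul_assoc, sq_mul_integral_exp_neg_mul_mul_exp_sub_one hn hnγ]

/-- if `π₀` is an orthogonal projection and `(S_t)` a `C₀`-semigroup with
`‖π₀ S_t g‖ ≤ e^{γt/2}‖π₀ g‖` (`γ ≥ 0`), then for the Yosida approximation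
`A_n h = n² ∫₀^∞ e^{−nt}(S_t h − h) dt` with `n > γ/2`:
`⟨π₀ A_n h, h⟩ ≤ (γ/(2 − γ/n))‖π₀ h‖²` for all `h`. -/
theorem stmt_13 {H : Type*} [NormedAddCommGroup H] [InnerProductSpace ℝ H]
    [CompleteSpace H] [SecondCountableTopology H]
    (S : ℝ → H →L[ℝ] H)
    (hS0 : S 0 = ContinuousLinearMap.id ℝ H)
    (hSadd : ∀ s ≥ (0:ℝ), ∀ t ≥ (0:ℝ), S (s + t) = (S s).comp (S t))
    (hScont : ∀ h : H, Tendsto (fun t => S t h) (nhdsWithin 0 (Ici 0)) (nhds h))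
    (π₀ : H →L[ℝ] H)
    (hidem : ∀ x : H, π₀ (π₀ x) = π₀ x)
    (hsa : ∀ x y : H, ⟪π₀ x, y⟫ = ⟪x, π₀ y⟫)
    (γ : ℝ) (hγ : 0 ≤ γ)
    (hbound : ∀ t ≥ (0:ℝ), ∀ g : H, ‖π₀ (S t g)‖ ≤ Real.exp (γ * t / 2) * ‖π₀ g‖)
    (n : ℝ) (hn : 0 < n) (hnγ : γ / 2 < n)
    (hInt : ∀ h : H, IntegrableOn (fun t => Real.exp (-(n * t)) • (S t h - h)) (Ioi 0)) :
    ∀ h : H,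
      ⟪π₀ (n ^ 2 • ∫ t in Ioi (0:ℝ), Real.exp (-(n * t)) • (S t h - h)), h⟫
        ≤ (γ / (2 - γ / n)) * ‖π₀ h‖ ^ 2 :=
  stmt_13_general S π₀ hidem hsa γ hbound n hn hnγ hInt
end

section
/- Suppose μ, σ satisfy: ‖μ(t,t,0)‖ ≤ ℓ_a(0), ‖μ'(t,s,0)‖ ≤ ℓ_a'(t−s), ‖μ(t,t,u₁)−μ(t,t,u₂)‖ ≤ ℓ_a(0)‖u₁−u₂‖, ‖μ'(t,s,u₁)−μ'(t,s,u₂)‖ ≤ ℓ_a'(t−s)‖u₁−u₂‖ for some ℓ_a ∈ H_w(ℝ), and analogously for σ with ℓ_b (in operator norm). Then the lifted coefficient a(t,h) := μ(t+·,t,h(0)) satisfies the Lipschitz bound ‖a(t,h₁)−a(t,h₂)‖_w ≤ ‖ℓ_a‖_{H_w(ℝ)}‖δ₀‖_op‖h₁−h₂‖_w and the growth bound ‖a(t,0)‖_w ≤ ‖ℓ_a‖_{H_w(ℝ)}, and similarly for b(t,h) := σ(t+·,t,h(0)). -/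
open MeasureTheory Set Filter Real

/-- Membership in the weighted space `H_w` of functions with values in a normed space. -/
def MemHw {E : Type*} [NormedAddCommGroup E] [NormedSpace ℝ E]
    (w : ℝ → ℝ) (f f' : ℝ → E) : Prop :=
  (∀ y ∈ Ici (0:ℝ), IntervalIntegrable f' volume 0 y) ∧
  (∀ y ∈ Ici (0:ℝ), f y = f 0 + ∫ s in (0:ℝ)..y, f' s) ∧
  IntegrableOn (fun y => w y * ‖f' y‖ ^ 2) (Ioi 0)


/-! Each of the four bounds is a pointwise majorant integrated against the weight: the value at `0`
is controlled by `ℓ(0)` and the derivative `s ↦ μ'(t + s, t, ·)` by `ℓ'(s)`, times a common factor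
(`‖u₁ - u₂‖` or `1`). The bound in terms of `h₁, h₂` then follows from
`‖h₁ 0 - h₂ 0‖² ≤ (1 + ∫ w⁻¹) (‖h₁ 0 - h₂ 0‖² + ∫ w ‖h₁' - h₂'‖²)`. -/

lemma MemHw.integrableOn_weight_mul_sq {w f f' : ℝ → ℝ} (hf : MemHw w f f') :
    IntegrableOn (fun s => w s * f' s ^ 2) (Ioi 0) := by
  simpa only [Real.norm_eq_abs, sq_abs] using hf.2.2

lemma integral_weight_mul_norm_sq_le {α E : Type*} [MeasurableSpace α] [NormedAddCommGroup E]
    {ν : Measure α} {w g : α → ℝ} {f : α → E} {c : ℝ}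
    (hw : ∀ᵐ x ∂ν, 0 ≤ w x) (hg : Integrable (fun x => w x * g x ^ 2) ν)
    (hf : ∀ᵐ x ∂ν, ‖f x‖ ≤ g x * c) :
    ∫ x, w x * ‖f x‖ ^ 2 ∂ν ≤ (∫ x, w x * g x ^ 2 ∂ν) * c ^ 2 := by
  rw [← integral_mul_const]
  refine integral_mono_of_nonneg (hw.mono fun x hx => by positivity) (hg.mul_const _) ?_
  filter_upwards [hw, hf] with x hwx hfx
  calc w x * ‖f x‖ ^ 2 ≤ w x * (g x * c) ^ 2 := by gcongr
    _ = w x * g x ^ 2 * c ^ 2 := by ring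

lemma sq_norm_add_integral_weight_mul_norm_sq_le {E : Type*} [NormedAddCommGroup E]
    {w g : ℝ → ℝ} {f : ℝ → E} {x : E} {a c : ℝ}
    (hw : ∀ s ∈ Ioi (0:ℝ), 0 ≤ w s) (hg : IntegrableOn (fun s => w s * g s ^ 2) (Ioi 0))
    (hx : ‖x‖ ≤ a * c) (hf : ∀ s ∈ Ioi (0:ℝ), ‖f s‖ ≤ g s * c) :
    ‖x‖ ^ 2 + ∫ s in Ioi (0:ℝ), w s * ‖f s‖ ^ 2
      ≤ (a ^ 2 + ∫ s in Ioi (0:ℝ), w s * g s ^ 2) * c ^ 2 := by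
  have hx' : ‖x‖ ^ 2 ≤ a ^ 2 * c ^ 2 := by
    rw [← mul_pow]; exact pow_le_pow_left₀ (norm_nonneg _) hx 2
  have hf' := integral_weight_mul_norm_sq_le ((ae_restrict_iff' measurableSet_Ioi).2 <|
    .of_forall hw) hg ((ae_restrict_iff' measurableSet_Ioi).2 <| .of_forall hf)
  linarith

section LiftedCoefficient

variable {U E : Type*} [NormedAddCommGroup U] [NormedAddCommGroup E]
  {w ℓ ℓ' : ℝ → ℝ} {μ μ' : ℝ → ℝ → U → E}

lemma lifted_coeff_lipschitz_bound
    (hw : ∀ s ∈ Ioi (0:ℝ), 0 ≤ w s) (hℓ' : IntegrableOn (fun s => w s * ℓ' s ^ 2) (Ioi 0))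
    (hLip : ∀ t ≥ (0:ℝ), ∀ u₁ u₂ : U, ‖μ t t u₁ - μ t t u₂‖ ≤ ℓ 0 * ‖u₁ - u₂‖)
    (h'Lip : ∀ t s : ℝ, 0 ≤ s → s ≤ t →
      ∀ u₁ u₂ : U, ‖μ' t s u₁ - μ' t s u₂‖ ≤ ℓ' (t - s) * ‖u₁ - u₂‖)
    {t : ℝ} (ht : 0 ≤ t) (u₁ u₂ : U) :
    ‖μ t t u₁ - μ t t u₂‖ ^ 2
        + ∫ s in Ioi (0:ℝ), w s * ‖μ' (t + s) t u₁ - μ' (t + s) t u₂‖ ^ 2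
      ≤ ((ℓ 0) ^ 2 + ∫ s in Ioi (0:ℝ), w s * (ℓ' s) ^ 2) * ‖u₁ - u₂‖ ^ 2 :=
  sq_norm_add_integral_weight_mul_norm_sq_le hw hℓ' (hLip t ht u₁ u₂) fun s hs => by
    simpa using h'Lip (t + s) t ht (by linarith [hs.out]) u₁ u₂

lemma lifted_coeff_growth_bound
    (hw : ∀ s ∈ Ioi (0:ℝ), 0 ≤ w s) (hℓ' : IntegrableOn (fun s => w s * ℓ' s ^ 2) (Ioi 0))
    (h0 : ∀ t ≥ (0:ℝ), ‖μ t t 0‖ ≤ ℓ 0)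
    (h'0 : ∀ t s : ℝ, 0 ≤ s → s ≤ t → ‖μ' t s 0‖ ≤ ℓ' (t - s))
    {t : ℝ} (ht : 0 ≤ t) :
    ‖μ t t 0‖ ^ 2 + ∫ s in Ioi (0:ℝ), w s * ‖μ' (t + s) t 0‖ ^ 2
      ≤ (ℓ 0) ^ 2 + ∫ s in Ioi (0:ℝ), w s * (ℓ' s) ^ 2 := by
  simpa using sq_norm_add_integral_weight_mul_norm_sq_le (c := 1) hw hℓ'
    (by simpa using h0 t ht) fun s hs => by
      simpa using h'0 (t + s) t ht (by linarith [hs.out])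

end LiftedCoefficient

theorem stmt_14_general {U V : Type*} [NormedAddCommGroup U] [InnerProductSpace ℝ U]
    [NormedAddCommGroup V] [InnerProductSpace ℝ V]
    (w : ℝ → ℝ) (hw_mono : MonotoneOn w (Ici 0))
    (hw0 : w 0 = 1)
    (μ μ' : ℝ → ℝ → U → U) (σ σ' : ℝ → ℝ → U → (V →L[ℝ] U))
    (ℓa ℓa' ℓb ℓb' : ℝ → ℝ)
    (hℓa : MemHw w ℓa ℓa') (hℓb : MemHw w ℓb ℓb')
    (hμ0 : ∀ t ≥ (0:ℝ), ‖μ t t 0‖ ≤ ℓa 0)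
    (hμ'0 : ∀ t s : ℝ, 0 ≤ s → s ≤ t → ‖μ' t s 0‖ ≤ ℓa' (t - s))
    (hμLip : ∀ t ≥ (0:ℝ), ∀ u₁ u₂ : U, ‖μ t t u₁ - μ t t u₂‖ ≤ ℓa 0 * ‖u₁ - u₂‖)
    (hμ'Lip : ∀ t s : ℝ, 0 ≤ s → s ≤ t →
      ∀ u₁ u₂ : U, ‖μ' t s u₁ - μ' t s u₂‖ ≤ ℓa' (t - s) * ‖u₁ - u₂‖)
    (hσ0 : ∀ t ≥ (0:ℝ), ‖σ t t 0‖ ≤ ℓb 0)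
    (hσ'0 : ∀ t s : ℝ, 0 ≤ s → s ≤ t → ‖σ' t s 0‖ ≤ ℓb' (t - s))
    (hσLip : ∀ t ≥ (0:ℝ), ∀ u₁ u₂ : U, ‖σ t t u₁ - σ t t u₂‖ ≤ ℓb 0 * ‖u₁ - u₂‖)
    (hσ'Lip : ∀ t s : ℝ, 0 ≤ s → s ≤ t →
      ∀ u₁ u₂ : U, ‖σ' t s u₁ - σ' t s u₂‖ ≤ ℓb' (t - s) * ‖u₁ - u₂‖) :
    ∀ t ≥ (0:ℝ),
      -- Lipschitz bound for a(t,·) in terms of the boundary values u_i = δ₀ h_i :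
      (∀ u₁ u₂ : U,
        ‖μ t t u₁ - μ t t u₂‖ ^ 2
            + ∫ s in Ioi (0:ℝ), w s * ‖μ' (t + s) t u₁ - μ' (t + s) t u₂‖ ^ 2
          ≤ ((ℓa 0) ^ 2 + ∫ s in Ioi (0:ℝ), w s * (ℓa' s) ^ 2) * ‖u₁ - u₂‖ ^ 2) ∧
      -- growth bound ‖a(t,0)‖²_w ≤ ‖ℓ_a‖²
      (‖μ t t 0‖ ^ 2 + ∫ s in Ioi (0:ℝ), w s * ‖μ' (t + s) t 0‖ ^ 2
        ≤ (ℓa 0) ^ 2 + ∫ s in Ioi (0:ℝ), w s * (ℓa' s) ^ 2) ∧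
      -- the same bounds for b(t,·)
      (∀ u₁ u₂ : U,
        ‖σ t t u₁ - σ t t u₂‖ ^ 2
            + ∫ s in Ioi (0:ℝ), w s * ‖σ' (t + s) t u₁ - σ' (t + s) t u₂‖ ^ 2
          ≤ ((ℓb 0) ^ 2 + ∫ s in Ioi (0:ℝ), w s * (ℓb' s) ^ 2) * ‖u₁ - u₂‖ ^ 2) ∧
      (‖σ t t 0‖ ^ 2 + ∫ s in Ioi (0:ℝ), w s * ‖σ' (t + s) t 0‖ ^ 2
        ≤ (ℓb 0) ^ 2 + ∫ s in Ioi (0:ℝ), w s * (ℓb' s) ^ 2) ∧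
      -- combined with ‖δ₀ h₁ − δ₀ h₂‖² ≤ ‖δ₀‖²‖h₁ − h₂‖²_w , ‖δ₀‖² = 1 + ∫₀^∞ w⁻¹ :
      (∀ h₁ h₁' h₂ h₂' : ℝ → U, MemHw w h₁ h₁' → MemHw w h₂ h₂' →
        ‖μ t t (h₁ 0) - μ t t (h₂ 0)‖ ^ 2
            + ∫ s in Ioi (0:ℝ), w s * ‖μ' (t + s) t (h₁ 0) - μ' (t + s) t (h₂ 0)‖ ^ 2
          ≤ ((ℓa 0) ^ 2 + ∫ s in Ioi (0:ℝ), w s * (ℓa' s) ^ 2)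
            * (1 + ∫ s in Ioi (0:ℝ), (w s)⁻¹)
            * (‖h₁ 0 - h₂ 0‖ ^ 2
                + ∫ s in Ioi (0:ℝ), w s * ‖h₁' s - h₂' s‖ ^ 2)) := by
  intro t ht
  have hw : ∀ s ∈ Ioi (0:ℝ), 0 ≤ w s := fun s hs =>
    (hw0.symm ▸ zero_le_one).trans (hw_mono self_mem_Ici (mem_Ici.2 hs.out.le) hs.out.le)
  have hℓa' := hℓa.integrableOn_weight_mul_sq
  have hLipa := lifted_coeff_lipschitz_bound hw hℓa' hμLip hμ'Lip ht
  refine ⟨hLipa, lifted_coeff_growth_bound hw hℓa' hμ0 hμ'0 ht,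
    lifted_coeff_lipschitz_bound hw hℓb.integrableOn_weight_mul_sq hσLip hσ'Lip ht,
    lifted_coeff_growth_bound hw hℓb.integrableOn_weight_mul_sq hσ0 hσ'0 ht,
    fun h₁ h₁' h₂ h₂' _ _ => (hLipa _ _).trans ?_⟩
  have hA : 0 ≤ ∫ s in Ioi (0:ℝ), w s * ℓa' s ^ 2 :=
    setIntegral_nonneg measurableSet_Ioi fun s hs => mul_nonneg (hw s hs) (sq_nonneg _)
  have hC : 0 ≤ ∫ s in Ioi (0:ℝ), (w s)⁻¹ :=
    setIntegral_nonneg measurableSet_Ioi fun s hs => inv_nonneg.2 (hw s hs)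
  have hY : 0 ≤ ∫ s in Ioi (0:ℝ), w s * ‖h₁' s - h₂' s‖ ^ 2 :=
    setIntegral_nonneg measurableSet_Ioi fun s hs => mul_nonneg (hw s hs) (sq_nonneg _)
  rw [← mul_one (_ * ‖h₁ 0 - h₂ 0‖ ^ 2), mul_right_comm]
  gcongr <;> linarith

/-- Proposition 4.7 of the paper: under pointwise Lipschitz/growth bounds on
`μ, σ` and their first-variable derivatives `μ', σ'` in terms of `ℓ_a, ℓ_b ∈ H_w(ℝ)`, the
lifted coefficients `a(t,h) = μ(t+·,t,h(0))`, `b(t,h) = σ(t+·,t,h(0))` satisfy Lipschitz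
and linear growth bounds in the `H_w`-norm with constants
`L_a = ‖ℓ_a‖_{H_w(ℝ)}‖δ₀‖`, `K_a = ‖ℓ_a‖_{H_w(ℝ)}` (and similarly for `b`). -/
theorem stmt_14 {U V : Type*} [NormedAddCommGroup U] [InnerProductSpace ℝ U]
    [CompleteSpace U] [SecondCountableTopology U]
    [NormedAddCommGroup V] [InnerProductSpace ℝ V] [CompleteSpace V]
    (w : ℝ → ℝ) (hw_cont : Continuous w) (hw_mono : MonotoneOn w (Ici 0))
    (hw0 : w 0 = 1)
    (hw_inv : IntegrableOn (fun s => (w s)⁻¹) (Ioi 0))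
    (μ μ' : ℝ → ℝ → U → U) (σ σ' : ℝ → ℝ → U → (V →L[ℝ] U))
    (ℓa ℓa' ℓb ℓb' : ℝ → ℝ)
    (hℓa : MemHw w ℓa ℓa') (hℓb : MemHw w ℓb ℓb')
    (hμ0 : ∀ t ≥ (0:ℝ), ‖μ t t 0‖ ≤ ℓa 0)
    (hμ'0 : ∀ t s : ℝ, 0 ≤ s → s ≤ t → ‖μ' t s 0‖ ≤ ℓa' (t - s))
    (hμLip : ∀ t ≥ (0:ℝ), ∀ u₁ u₂ : U, ‖μ t t u₁ - μ t t u₂‖ ≤ ℓa 0 * ‖u₁ - u₂‖)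
    (hμ'Lip : ∀ t s : ℝ, 0 ≤ s → s ≤ t →
      ∀ u₁ u₂ : U, ‖μ' t s u₁ - μ' t s u₂‖ ≤ ℓa' (t - s) * ‖u₁ - u₂‖)
    (hσ0 : ∀ t ≥ (0:ℝ), ‖σ t t 0‖ ≤ ℓb 0)
    (hσ'0 : ∀ t s : ℝ, 0 ≤ s → s ≤ t → ‖σ' t s 0‖ ≤ ℓb' (t - s))
    (hσLip : ∀ t ≥ (0:ℝ), ∀ u₁ u₂ : U, ‖σ t t u₁ - σ t t u₂‖ ≤ ℓb 0 * ‖u₁ - u₂‖)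
    (hσ'Lip : ∀ t s : ℝ, 0 ≤ s → s ≤ t →
      ∀ u₁ u₂ : U, ‖σ' t s u₁ - σ' t s u₂‖ ≤ ℓb' (t - s) * ‖u₁ - u₂‖) :
    ∀ t ≥ (0:ℝ),
      -- Lipschitz bound for a(t,·) in terms of the boundary values u_i = δ₀ h_i :
      (∀ u₁ u₂ : U,
        ‖μ t t u₁ - μ t t u₂‖ ^ 2
            + ∫ s in Ioi (0:ℝ), w s * ‖μ' (t + s) t u₁ - μ' (t + s) t u₂‖ ^ 2
          ≤ ((ℓa 0) ^ 2 + ∫ s in Ioi (0:ℝ), w s * (ℓa' s) ^ 2) * ‖u₁ - u₂‖ ^ 2) ∧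
      -- growth bound ‖a(t,0)‖²_w ≤ ‖ℓ_a‖²
      (‖μ t t 0‖ ^ 2 + ∫ s in Ioi (0:ℝ), w s * ‖μ' (t + s) t 0‖ ^ 2
        ≤ (ℓa 0) ^ 2 + ∫ s in Ioi (0:ℝ), w s * (ℓa' s) ^ 2) ∧
      -- the same bounds for b(t,·)
      (∀ u₁ u₂ : U,
        ‖σ t t u₁ - σ t t u₂‖ ^ 2
            + ∫ s in Ioi (0:ℝ), w s * ‖σ' (t + s) t u₁ - σ' (t + s) t u₂‖ ^ 2
          ≤ ((ℓb 0) ^ 2 + ∫ s in Ioi (0:ℝ), w s * (ℓb' s) ^ 2) * ‖u₁ - u₂‖ ^ 2) ∧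
      (‖σ t t 0‖ ^ 2 + ∫ s in Ioi (0:ℝ), w s * ‖σ' (t + s) t 0‖ ^ 2
        ≤ (ℓb 0) ^ 2 + ∫ s in Ioi (0:ℝ), w s * (ℓb' s) ^ 2) ∧
      -- combined with ‖δ₀ h₁ − δ₀ h₂‖² ≤ ‖δ₀‖²‖h₁ − h₂‖²_w , ‖δ₀‖² = 1 + ∫₀^∞ w⁻¹ :
      (∀ h₁ h₁' h₂ h₂' : ℝ → U, MemHw w h₁ h₁' → MemHw w h₂ h₂' →
        ‖μ t t (h₁ 0) - μ t t (h₂ 0)‖ ^ 2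
            + ∫ s in Ioi (0:ℝ), w s * ‖μ' (t + s) t (h₁ 0) - μ' (t + s) t (h₂ 0)‖ ^ 2
          ≤ ((ℓa 0) ^ 2 + ∫ s in Ioi (0:ℝ), w s * (ℓa' s) ^ 2)
            * (1 + ∫ s in Ioi (0:ℝ), (w s)⁻¹)
            * (‖h₁ 0 - h₂ 0‖ ^ 2
                + ∫ s in Ioi (0:ℝ), w s * ‖h₁' s - h₂' s‖ ^ 2)) :=
  stmt_14_general w hw_mono hw0 μ μ' σ σ' ℓa ℓa' ℓb ℓb' hℓa hℓb hμ0 hμ'0 hμLip hμ'Lip hσ0 hσ'0 hσLip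
    hσ'Lip
end
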